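/- arXiv:2504.15956 — 5 statements merged into one kernel-verified Lean document; each statement's English description precedes it below -/
import Mathlib

section
/- Let x = (x_1, ..., x_n) be a real vector whose largest entry x_1 is unique, and let x_2 be the second largest entry. For any ε > 0, if β ≥ (ln(n-1) - ln ε)/(x_1 - x_2), then the softmax with inverse temperature β satisfies ‖Softmax_β(x) - e_1‖_∞ ≤ ε, where e_1 is the one-hot vector at the position of the maximal entry. -/
open Finset Real

/-- Softmax with inverse temperature `β`. -/
noncomputable def softmax {n : ℕ} (β : ℝ) (x : Fin n → ℝ) (i : Fin n) : ℝ :=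
  Real.exp (β * x i) / ∑ j, Real.exp (β * x j)

/-- Approximating hardmax with finite-temperature softmax, unique largest entry case. -/
theorem softmax_approx_hardmax_unique_max {n : ℕ} (hn : 2 ≤ n) (x : Fin n → ℝ)
    (i₀ : Fin n) (hmax : ∀ j, j ≠ i₀ → x j < x i₀)
    (x₂ : ℝ) (hx₂mem : ∃ j, j ≠ i₀ ∧ x j = x₂) (hx₂ : ∀ j, j ≠ i₀ → x j ≤ x₂)
    (ε : ℝ) (hε : 0 < ε) (β : ℝ)
    (hβ : (Real.log (n - 1) - Real.log ε) / (x i₀ - x₂) ≤ β) :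
    ∀ i, |softmax β x i - (if i = i₀ then (1 : ℝ) else 0)| ≤ ε := by
  have hSpos : 0 < ∑ j, Real.exp (β * x j) :=
    Finset.sum_pos (fun j _ => Real.exp_pos _) ⟨i₀, Finset.mem_univ i₀⟩
  have hterm_le : ∀ j : Fin n, Real.exp (β * x j) ≤ ∑ j, Real.exp (β * x j) :=
    fun j => Finset.single_le_sum (f := fun k => Real.exp (β * x k)) (fun k _ => (Real.exp_pos _).le) (Finset.mem_univ j)
  have hnonneg : ∀ j, 0 ≤ softmax β x j :=
    fun j => div_nonneg (Real.exp_pos _).le hSpos.le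
  have hle1 : ∀ j, softmax β x j ≤ 1 := fun j => (div_le_one hSpos).2 (hterm_le j)
  intro i
  by_cases hε1 : 1 ≤ ε
  · by_cases h : i = i₀
    · simp only [h, if_pos]
      rw [abs_sub_comm, abs_of_nonneg (by linarith [hle1 i₀])]
      linarith [hnonneg i₀]
    · rw [if_neg h, sub_zero]
      rw [abs_of_nonneg (hnonneg i)]
      exact (hle1 i).trans hε1
  · push_neg at hε1
    have hn1 : (1:ℝ) ≤ (n:ℝ) - 1 := by
      have : (2:ℝ) ≤ (n:ℝ) := by exact_mod_cast hn
      linarith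
    have hgap : 0 < x i₀ - x₂ := by
      obtain ⟨j, hj, hje⟩ := hx₂mem
      have := hmax j hj
      linarith
    have hlogpos : 0 < Real.log ((n:ℝ) - 1) - Real.log ε := by
      have h1 : 0 ≤ Real.log ((n:ℝ) - 1) := Real.log_nonneg hn1
      have h2 : Real.log ε < 0 := Real.log_neg hε hε1
      linarith
    have hβpos : 0 < β := lt_of_lt_of_le (div_pos hlogpos hgap) hβ
    have hβmul : Real.log ((n:ℝ) - 1) - Real.log ε ≤ β * (x i₀ - x₂) :=
      (div_le_iff₀ hgap).1 hβ
    have hεn : 0 < ε / ((n:ℝ) - 1) := div_pos hε (by linarith)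
    have key : ∀ j, j ≠ i₀ → Real.exp (β * x j) ≤ ε / ((n:ℝ) - 1) * Real.exp (β * x i₀) := by
      intro j hj
      have h1 : β * x j - β * x i₀ ≤ Real.log (ε / ((n:ℝ) - 1)) := by
        rw [Real.log_div hε.ne' (by linarith)]
        have h2 : β * x j ≤ β * x₂ := mul_le_mul_of_nonneg_left (hx₂ j hj) hβpos.le
        nlinarith
      have h3 : Real.exp (β * x j - β * x i₀) ≤ ε / ((n:ℝ) - 1) := by
        calc Real.exp (β * x j - β * x i₀) ≤ Real.exp (Real.log (ε / ((n:ℝ) - 1))) :=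
              Real.exp_le_exp.2 h1
          _ = ε / ((n:ℝ) - 1) := Real.exp_log hεn
      calc Real.exp (β * x j) = Real.exp (β * x j - β * x i₀) * Real.exp (β * x i₀) := by
            rw [← Real.exp_add]; ring_nf
        _ ≤ ε / ((n:ℝ) - 1) * Real.exp (β * x i₀) :=
            mul_le_mul_of_nonneg_right h3 (Real.exp_pos _).le
    have hsmall : ∀ j, j ≠ i₀ → softmax β x j ≤ ε / ((n:ℝ) - 1) := by
      intro j hj
      unfold softmax
      rw [div_le_iff₀ hSpos]
      calc Real.exp (β * x j) ≤ ε / ((n:ℝ) - 1) * Real.exp (β * x i₀) := key j hj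
        _ ≤ ε / ((n:ℝ) - 1) * ∑ k, Real.exp (β * x k) :=
            mul_le_mul_of_nonneg_left (hterm_le i₀) hεn.le
    by_cases h : i = i₀
    · simp only [h, if_pos]
      have hsum1 : ∑ j, softmax β x j = 1 := by
        unfold softmax
        rw [← Finset.sum_div, div_self hSpos.ne']
      have hsplit : softmax β x i₀ + ∑ j ∈ Finset.univ.erase i₀, softmax β x j = 1 := by
        rw [Finset.add_sum_erase _ _ (Finset.mem_univ i₀)]
        exact hsum1
      have hcard : (Finset.univ.erase i₀).card = n - 1 := by
        rw [Finset.card_erase_of_mem (Finset.mem_univ i₀), Finset.card_univ, Fintype.card_fin]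
      have hsumle : ∑ j ∈ Finset.univ.erase i₀, softmax β x j ≤ ε := by
        calc ∑ j ∈ Finset.univ.erase i₀, softmax β x j
            ≤ (Finset.univ.erase i₀).card • (ε / ((n:ℝ) - 1)) :=
              Finset.sum_le_card_nsmul _ _ _
                (fun j hj => hsmall j (Finset.ne_of_mem_erase hj))
          _ = ((n - 1 : ℕ) : ℝ) * (ε / ((n:ℝ) - 1)) := by rw [hcard, nsmul_eq_mul]
          _ = ((n:ℝ) - 1) * (ε / ((n:ℝ) - 1)) := by
              rw [Nat.cast_sub (by omega)]; norm_num
          _ = ε := mul_div_cancel₀ ε (by linarith)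
      have hsumnn : 0 ≤ ∑ j ∈ Finset.univ.erase i₀, softmax β x j :=
        Finset.sum_nonneg fun j _ => hnonneg j
      rw [abs_sub_comm, abs_of_nonneg (by linarith [hle1 i₀])]
      linarith
    · rw [if_neg h, sub_zero]
      rw [abs_of_nonneg (hnonneg i)]
      calc softmax β x i ≤ ε / ((n:ℝ) - 1) := hsmall i h
        _ ≤ ε / 1 := by
            apply div_le_div_of_nonneg_left hε.le one_pos hn1
        _ = ε := div_one ε
end

section
/- Let x ∈ ℝⁿ with largest entry x_1 and second-largest entry x_2, separated by δ = x_1 - x_2 ≥ 0, and suppose every other entry is at most x_1 - γ for some constant γ > 0. If β ≥ (ln(n-2) - ln ε)/γ, then ‖Softmax_β(x) - (1/(1+e^{-βδ})) e_1 - (e^{-βδ}/(1+e^{-βδ})) e_2‖_∞ ≤ ε, where e_1, e_2 are the one-hot vectors at the positions of the top two entries. -/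
open Finset Real

set_option maxHeartbeats 1600000

/-- Approximating hardmax with finite-temperature softmax, two largest entries
(tied or separated by `δ = x i₁ - x i₂ ≥ 0`) case. -/
theorem softmax_approx_hardmax_two_max {n : ℕ} (hn : 3 ≤ n) (x : Fin n → ℝ)
    (i₁ i₂ : Fin n) (hne : i₁ ≠ i₂)
    (hmax : ∀ j, x j ≤ x i₁) (hsecond : ∀ j, j ≠ i₁ → x j ≤ x i₂)
    (γ : ℝ) (hγ : 0 < γ) (hgap : ∀ j, j ≠ i₁ → j ≠ i₂ → x j ≤ x i₁ - γ)
    (ε : ℝ) (hε : 0 < ε) (β : ℝ)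
    (hβ : (Real.log (n - 2) - Real.log ε) / γ ≤ β) :
    ∀ i, |softmax β x i
        - ((1 / (1 + Real.exp (-(β * (x i₁ - x i₂))))) * (if i = i₁ then 1 else 0)
          + (Real.exp (-(β * (x i₁ - x i₂))) / (1 + Real.exp (-(β * (x i₁ - x i₂)))))
              * (if i = i₂ then 1 else 0))| ≤ ε := by
  have hn3 : (3:ℝ) ≤ (n:ℝ) := by exact_mod_cast hn
  intro i
  set A := Real.exp (β * x i₁) with hA
  set B := Real.exp (β * x i₂) with hB
  have hApos : 0 < A := Real.exp_pos _
  have hBpos : 0 < B := Real.exp_pos _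
  set T := (univ : Finset (Fin n)) \ {i₁, i₂} with hT
  set R := ∑ j ∈ T, Real.exp (β * x j) with hR
  have hRnn : 0 ≤ R := Finset.sum_nonneg fun j _ => (Real.exp_pos _).le
  have hSsplit : (∑ j, Real.exp (β * x j)) = A + B + R := by
    rw [hR, hT, hA, hB,
      ← Finset.sum_sdiff (Finset.subset_univ ({i₁, i₂} : Finset (Fin n))),
      Finset.sum_pair hne]
    ring
  set S := ∑ j, Real.exp (β * x j) with hS
  have hSpos : 0 < S := by rw [hSsplit]; linarith
  have hABpos : 0 < A + B := by linarith
  have hTmem : ∀ j, j ∈ T ↔ j ≠ i₁ ∧ j ≠ i₂ := by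
    intro j
    simp [hT, Finset.mem_sdiff]
  have hTcard : (T.card : ℝ) = (n:ℝ) - 2 := by
    rw [hT, Finset.card_sdiff_of_subset (Finset.subset_univ _), Finset.card_pair hne,
      Finset.card_univ, Fintype.card_fin]
    have h2 : 2 ≤ n := by omega
    push_cast [Nat.cast_sub h2]
    ring
  -- key bound from hβ
  have hkey : ((n:ℝ) - 2) * Real.exp (-(β * γ)) ≤ ε := by
    have hlog : Real.log ((n:ℝ) - 2) - Real.log ε ≤ β * γ := by
      rw [div_le_iff₀ hγ] at hβ
      linarith [hβ]
    have h1 : ((n:ℝ) - 2) = Real.exp (Real.log ((n:ℝ) - 2)) :=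
      (Real.exp_log (by linarith)).symm
    calc ((n:ℝ) - 2) * Real.exp (-(β * γ))
        = Real.exp (Real.log ((n:ℝ) - 2) + -(β * γ)) := by
          rw [Real.exp_add, Real.exp_log (by linarith)]
      _ ≤ Real.exp (Real.log ε) := Real.exp_le_exp.mpr (by linarith)
      _ = ε := Real.exp_log hε
  -- rewrite the hardmax fractions
  have hE : Real.exp (-(β * (x i₁ - x i₂))) = B / A := by
    rw [hA, hB, ← Real.exp_sub]
    congr 1; ring
  have hfrac1 : 1 / (1 + Real.exp (-(β * (x i₁ - x i₂)))) = A / (A + B) := by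
    rw [hE]
    field_simp
  have hfrac2 : Real.exp (-(β * (x i₁ - x i₂))) / (1 + Real.exp (-(β * (x i₁ - x i₂))))
      = B / (A + B) := by
    rw [hE]
    field_simp
  -- the chains: all three errors are at most R / A
  have hchain1 : A / (A + B) - A / S ≤ R / A := by
    rw [div_sub_div _ _ (ne_of_gt hABpos) (ne_of_gt hSpos),
      div_le_div_iff₀ (by positivity) hApos, hSsplit]
    nlinarith [mul_nonneg hRnn (mul_nonneg hApos.le hBpos.le),
      mul_nonneg hRnn (mul_nonneg hBpos.le hBpos.le),
      mul_nonneg (mul_nonneg hRnn hRnn) hABpos.le]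
  have hchain2 : B / (A + B) - B / S ≤ R / A := by
    rw [div_sub_div _ _ (ne_of_gt hABpos) (ne_of_gt hSpos),
      div_le_div_iff₀ (by positivity) hApos, hSsplit]
    nlinarith [mul_nonneg hRnn (mul_nonneg hApos.le hBpos.le),
      mul_nonneg hRnn (mul_nonneg hApos.le hApos.le),
      mul_nonneg (mul_nonneg hRnn hRnn) hABpos.le]
  have hterm_le_R : ∀ j, j ≠ i₁ → j ≠ i₂ → Real.exp (β * x j) ≤ R := by
    intro j h1 h2
    rw [hR]
    exact Finset.single_le_sum (f := fun j => Real.exp (β * x j))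
      (fun k _ => (Real.exp_pos _).le) ((hTmem j).mpr ⟨h1, h2⟩)
  -- final bound on R / A (or the crude bound when β < 0)
  have hub : R / A ≤ ε ∨ 1 ≤ ε := by
    rcases le_or_gt 0 β with hβ0 | hβ0
    · left
      have h1 : R ≤ ((n:ℝ) - 2) * Real.exp (-(β * γ)) * A := by
        have hterm : ∀ j ∈ T, Real.exp (β * x j) ≤ Real.exp (-(β * γ)) * A := by
          intro j hj
          obtain ⟨hj1, hj2⟩ := (hTmem j).mp hj
          rw [hA, ← Real.exp_add]
          apply Real.exp_le_exp.mpr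
          have := hgap j hj1 hj2
          nlinarith
        calc R ≤ ∑ j ∈ T, Real.exp (-(β * γ)) * A := by
              rw [hR]; exact Finset.sum_le_sum hterm
          _ = (T.card : ℝ) * (Real.exp (-(β * γ)) * A) := by
              rw [Finset.sum_const, nsmul_eq_mul]
          _ = ((n:ℝ) - 2) * Real.exp (-(β * γ)) * A := by rw [hTcard]; ring
      rw [div_le_iff₀ hApos]
      calc R ≤ ((n:ℝ) - 2) * Real.exp (-(β * γ)) * A := h1
        _ ≤ ε * A := mul_le_mul_of_nonneg_right hkey hApos.le
    · right
      have hbγ : β * γ < 0 := mul_neg_of_neg_of_pos hβ0 hγ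
      have he : 1 ≤ Real.exp (-(β * γ)) := by
        linarith [Real.add_one_le_exp (-(β * γ))]
      have h1 : (1:ℝ) ≤ ((n:ℝ) - 2) * Real.exp (-(β * γ)) := by
        calc (1:ℝ) = 1 * 1 := by ring
          _ ≤ ((n:ℝ) - 2) * Real.exp (-(β * γ)) :=
            mul_le_mul (by linarith) he one_pos.le (by linarith)
      linarith
  -- case analysis on i
  rcases eq_or_ne i i₁ with hi1 | hi1
  · subst hi1
    simp only [softmax, ← hS, eq_self_iff_true, if_true, if_pos rfl, if_neg hne, mul_one, mul_zero, add_zero,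
      hfrac1, ← hA]
    have hle : A / S ≤ A / (A + B) := by
      rw [div_le_div_iff₀ hSpos hABpos, hSsplit]
      nlinarith [mul_nonneg hApos.le hRnn]
    rw [abs_of_nonpos (by linarith)]
    rcases hub with h | h
    · linarith [hchain1]
    · have h1 : A / (A + B) ≤ 1 := by rw [div_le_one hABpos]; linarith
      have h2 : 0 ≤ A / S := by positivity
      linarith
  rcases eq_or_ne i i₂ with hi2 | hi2
  · subst hi2
    simp only [softmax, ← hS, eq_self_iff_true, if_true, if_pos rfl, if_neg hi1, mul_one, mul_zero, zero_add,
      hfrac2, ← hB]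
    have hle : B / S ≤ B / (A + B) := by
      rw [div_le_div_iff₀ hSpos hABpos, hSsplit]
      nlinarith [mul_nonneg hBpos.le hRnn]
    rw [abs_of_nonpos (by linarith)]
    rcases hub with h | h
    · linarith [hchain2]
    · have h1 : B / (A + B) ≤ 1 := by rw [div_le_one hABpos]; linarith
      have h2 : 0 ≤ B / S := by positivity
      linarith
  · simp only [softmax, ← hS, if_neg hi1, if_neg hi2, mul_zero, add_zero, sub_zero]
    rw [abs_of_nonneg (by positivity)]
    have ht := hterm_le_R i hi1 hi2
    rcases hub with h | h
    · have h3 : Real.exp (β * x i) / S ≤ R / A := by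
        rw [div_le_div_iff₀ hSpos hApos, hSsplit]
        nlinarith [mul_le_mul_of_nonneg_right ht hApos.le,
          mul_nonneg hRnn hBpos.le, mul_nonneg hRnn hRnn]
      linarith
    · have h3 : Real.exp (β * x i) / S ≤ 1 := by
        rw [div_le_one hSpos, hSsplit]
        linarith
      linarith
end

section
/- Fix reals w ∈ ℝ^d, t ∈ ℝ, and equidistant interpolation points L̃_k = a + k(b-a)/p for k = 0, ..., p-1 with a < b. For any x ∈ ℝ^d, the index k minimizing (−2wᵀx − 2t + L̃_0 + L̃_k)·k over k ∈ {0, 1, ..., p−1} is the same as the index minimizing |wᵀx + t − L̃_k| over the same set, i.e., the two minimization objectives have the same set of minimizers. -/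
open Finset Real

/-- Equidistant interpolation points `L̃_k = a + k (b-a)/p`. -/
noncomputable def interp (a b : ℝ) (p k : ℕ) : ℝ := a + k * ((b - a) / p)

open scoped Classical in
/-- The attention-score minimization objective `(−2wᵀx − 2t + L̃_0 + L̃_k)·k`
has the same set of minimizers over `k ∈ {0,...,p−1}` as `|wᵀx + t − L̃_k|`. -/
theorem argmin_score_eq_argmin_dist {d : ℕ} (w x : Fin d → ℝ) (t a b : ℝ)
    (hab : a < b) (p : ℕ) (hp : 1 ≤ p) :
    (Finset.range p).filter (fun k => ∀ k' ∈ Finset.range p,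
        (-2 * (∑ i, w i * x i) - 2 * t + interp a b p 0 + interp a b p k) * k
          ≤ (-2 * (∑ i, w i * x i) - 2 * t + interp a b p 0 + interp a b p k') * k')
    = (Finset.range p).filter (fun k => ∀ k' ∈ Finset.range p,
        |(∑ i, w i * x i) + t - interp a b p k|
          ≤ |(∑ i, w i * x i) + t - interp a b p k'|) := by
  set s : ℝ := (∑ i, w i * x i) + t with hs
  have hc : (0:ℝ) < (b - a) / p := by
    apply div_pos (by linarith)
    exact_mod_cast Nat.lt_of_lt_of_le Nat.zero_lt_one hp
  have key : ∀ m n : ℕ,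
      ((-2 * (∑ i, w i * x i) - 2 * t + interp a b p 0 + interp a b p m) * m
        ≤ (-2 * (∑ i, w i * x i) - 2 * t + interp a b p 0 + interp a b p n) * n)
      ↔ |s - interp a b p m| ≤ |s - interp a b p n| := by
    intro m n
    rw [← Real.sqrt_sq_eq_abs, ← Real.sqrt_sq_eq_abs,
      Real.sqrt_le_sqrt_iff (by positivity)]
    simp only [interp, hs]
    constructor
    · intro h
      nlinarith [mul_le_mul_of_nonneg_left h hc.le]
    · intro h
      have h3 : (0:ℝ) < p / (b - a) := by
        rw [div_pos_iff]; left
        constructor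
        · exact_mod_cast Nat.lt_of_lt_of_le Nat.zero_lt_one hp
        · linarith
      nlinarith [mul_le_mul_of_nonneg_left h h3.le, mul_pos hc h3]
  ext k
  simp only [Finset.mem_filter, Finset.mem_range]
  constructor
  · rintro ⟨hk, h⟩
    exact ⟨hk, fun k' hk' => (key k k').mp (h k' hk')⟩
  · rintro ⟨hk, h⟩
    exact ⟨hk, fun k' hk' => (key k k').mpr (h k' hk')⟩
end

section
/- For every grid point v in the grid G_D of [−B,B]^N and every x ∈ [−B,B]^N: if x lies in the core cube P_{v_x} of some grid point v_x (i.e., ‖x − v_x‖_∞ ≤ (1−δ)B/g), then the function FFN(x) = Σ_{v∈G_D} f(v)·ReLU(R_v(x) − N + 1) satisfies FFN(x) = f(v_x), where R_v is the trapezoidal bump sum as above. -/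
open Finset

/-- The trapezoidal bump: `1` on `[-(1-δ), 1-δ]`, `0` outside `(-1,1)`,
linear interpolation in between. -/
noncomputable def phi (δ y : ℝ) : ℝ :=
  if |y| ≤ 1 - δ then 1 else if |y| < 1 then (1 - |y|) / δ else 0

/-- The bump sum `R_v(x) = Σ_i φ(g (x_i − v_i)/B)`. -/
noncomputable def bumpSum {N : ℕ} (δ B : ℝ) (g : ℕ) (v x : Fin N → ℝ) : ℝ :=
  ∑ i, phi δ (g * (x i - v i) / B)

/-- The grid center indexed by `κ : Fin N → Fin g`. -/
noncomputable def gridPt {N : ℕ} (B : ℝ) (g : ℕ) (κ : Fin N → Fin g) : Fin N → ℝ :=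
  fun i => -B * (g - 1) / g + 2 * B * (κ i) / g

/-- The ReLU feed-forward combination of the bump functions over all grid centers. -/
noncomputable def bumpFFN {N : ℕ} (δ B : ℝ) (g : ℕ) (f : (Fin N → ℝ) → ℝ)
    (x : Fin N → ℝ) : ℝ :=
  ∑ κ : Fin N → Fin g, f (gridPt B g κ) * max (bumpSum δ B g (gridPt B g κ) x - N + 1) 0

lemma phi_eq_one {δ y : ℝ} (h : |y| ≤ 1 - δ) : phi δ y = 1 := by
  simp [phi, h]

lemma phi_eq_zero {δ y : ℝ} (hδ : 0 < δ) (h : 1 ≤ |y|) : phi δ y = 0 := by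
  have h1 : ¬ |y| ≤ 1 - δ := by linarith
  have h2 : ¬ |y| < 1 := by linarith
  simp [phi, h1, h2]

lemma phi_le_one {δ y : ℝ} (hδ : 0 < δ) : phi δ y ≤ 1 := by
  unfold phi
  split_ifs with h1 h2
  · exact le_refl 1
  · push_neg at h1
    rw [div_le_one hδ]; linarith
  · exact zero_le_one

/-- If `x` lies in the core cube of the grid point `v_x = gridPt B g κx`, then the
bump-function network collapses to the single value `f(v_x)`. -/
theorem bumpFFN_eq_on_core {N : ℕ} (hN : 0 < N) (B : ℝ) (hB : 0 < B)
    (g : ℕ) (hg : 0 < g) (δ : ℝ) (hδ0 : 0 < δ) (hδ1 : δ < 1)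
    (f : (Fin N → ℝ) → ℝ) (x : Fin N → ℝ) (hx : ∀ i, |x i| ≤ B)
    (κx : Fin N → Fin g) (hcore : ∀ i, |x i - gridPt B g κx i| ≤ (1 - δ) * B / g) :
    bumpFFN δ B g f x = f (gridPt B g κx) := by
  have hgR : (0:ℝ) < g := by exact_mod_cast hg
  unfold bumpFFN
  rw [Finset.sum_eq_single κx]
  · -- the κx term equals f(v)
    have hS : bumpSum δ B g (gridPt B g κx) x = N := by
      unfold bumpSum
      rw [Finset.sum_congr rfl (fun i _ => ?_), Finset.sum_const, Finset.card_univ,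
        Fintype.card_fin, nsmul_eq_mul, mul_one]
      apply phi_eq_one
      have hi := hcore i
      rw [abs_div, abs_mul, abs_of_pos hgR, abs_of_pos hB]
      rw [div_le_iff₀ hB]
      calc (g:ℝ) * |x i - gridPt B g κx i| ≤ g * ((1 - δ) * B / g) := by
            exact mul_le_mul_of_nonneg_left hi hgR.le
        _ = (1 - δ) * B := by field_simp
    rw [hS]
    norm_num
  · -- other terms vanish
    intro κ _ hκ
    have : ∃ i, κ i ≠ κx i := by
      by_contra h
      push_neg at h
      exact hκ (funext h)
    obtain ⟨i0, hi0⟩ := this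
    have hfar : 1 ≤ |(g:ℝ) * (x i0 - gridPt B g κ i0) / B| := by
      have hvv : |gridPt B g κ i0 - gridPt B g κx i0| ≥ 2 * B / g := by
        have h1 : (1:ℝ) ≤ |((κ i0 : ℤ) : ℝ) - ((κx i0 : ℤ) : ℝ)| := by
          have hne : ((κ i0 : ℤ)) ≠ ((κx i0 : ℤ)) := by
            exact_mod_cast fun h => hi0 (Fin.ext (by exact_mod_cast h))
          have := Int.one_le_abs (sub_ne_zero.mpr hne)
          calc (1:ℝ) ≤ |((κ i0 : ℤ) - (κx i0 : ℤ) : ℤ)| := by exact_mod_cast this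
            _ = |((κ i0 : ℤ) : ℝ) - ((κx i0 : ℤ) : ℝ)| := by push_cast; rfl
        have : gridPt B g κ i0 - gridPt B g κx i0
            = 2 * B / g * (((κ i0 : ℤ) : ℝ) - ((κx i0 : ℤ) : ℝ)) := by
          unfold gridPt; push_cast; ring
        rw [this, abs_mul, abs_of_pos (by positivity : (0:ℝ) < 2 * B / g)]
        have := mul_le_mul_of_nonneg_left h1 (by positivity : (0:ℝ) ≤ 2 * B / g)
        linarith
      have hx0 : |x i0 - gridPt B g κ i0| ≥ (1 + δ) * B / g := by
        have ht := abs_sub_abs_le_abs_sub (gridPt B g κ i0 - gridPt B g κx i0)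
          (gridPt B g κ i0 - x i0)
        have h2 : |gridPt B g κ i0 - x i0 - (gridPt B g κ i0 - gridPt B g κx i0)|
            = |x i0 - gridPt B g κx i0| := by rw [← abs_neg]; ring_nf
        have hc := hcore i0
        have habs : |gridPt B g κ i0 - x i0| = |x i0 - gridPt B g κ i0| := abs_sub_comm _ _
        have key : |x i0 - gridPt B g κ i0| ≥
            |gridPt B g κ i0 - gridPt B g κx i0| - |x i0 - gridPt B g κx i0| := by
          have := abs_sub_abs_le_abs_sub (gridPt B g κ i0 - gridPt B g κx i0)
            (x i0 - gridPt B g κx i0)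
          have he : gridPt B g κ i0 - gridPt B g κx i0 - (x i0 - gridPt B g κx i0)
              = -(x i0 - gridPt B g κ i0) := by ring
          rw [he, abs_neg] at this
          linarith
        have : |x i0 - gridPt B g κ i0| ≥ 2 * B / g - (1 - δ) * B / g := by
          linarith
        calc |x i0 - gridPt B g κ i0| ≥ 2 * B / g - (1 - δ) * B / g := this
          _ = (1 + δ) * B / g := by ring
      rw [abs_div, abs_mul, abs_of_pos hgR, abs_of_pos hB, le_div_iff₀ hB]
      calc (1:ℝ) * B = B := one_mul B
        _ ≤ (1 + δ) * B := by nlinarith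
        _ = g * ((1 + δ) * B / g) := by field_simp
        _ ≤ g * |x i0 - gridPt B g κ i0| := mul_le_mul_of_nonneg_left hx0 hgR.le
    have hSle : bumpSum δ B g (gridPt B g κ) x ≤ N - 1 := by
      unfold bumpSum
      calc ∑ i, phi δ (g * (x i - gridPt B g κ i) / B)
          ≤ ∑ i, (if i = i0 then 0 else 1 : ℝ) := by
            apply Finset.sum_le_sum
            intro i _
            by_cases h : i = i0
            · subst h; simp [phi_eq_zero hδ0 hfar]
            · simp [h, phi_le_one hδ0]
        _ = N - 1 := by
            rw [Finset.sum_ite, Finset.sum_const_zero, Finset.sum_const, zero_add,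
              nsmul_eq_mul, mul_one, Finset.filter_ne', Finset.card_erase_of_mem (Finset.mem_univ i0),
              Finset.card_univ, Fintype.card_fin]
            rw [Nat.cast_sub hN]
            norm_num
    have : max (bumpSum δ B g (gridPt B g κ) x - N + 1) 0 = 0 := by
      apply max_eq_right; linarith
    rw [this, mul_zero]
  · intro h; exact absurd (Finset.mem_univ κx) h
end

section
/- Let f : K → ℝ be continuous on a compact set K ⊆ [−B, B]^N. For any ε > 0 and 1 ≤ p < ∞, there exists a two-layer ReLU feed-forward network FFN (a finite linear combination of ReLU units applied to affine functions of the input) such that ‖FFN − f‖_{L^p(K)} ≤ ε. -/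
open Finset MeasureTheory

def IsFFN (N : ℕ) (F : (Fin N → ℝ) → ℝ) : Prop :=
  ∃ (M : ℕ) (c b : Fin M → ℝ) (w : Fin M → Fin N → ℝ),
    F = fun x => ∑ i, c i * max (∑ j, w i j * x j + b i) 0

lemma isFFN_zero (N : ℕ) : IsFFN N (fun _ => 0) :=
  ⟨0, 0, 0, 0, by funext x; simp⟩

lemma isFFN_add {N : ℕ} {F G : (Fin N → ℝ) → ℝ} (hF : IsFFN N F) (hG : IsFFN N G) :
    IsFFN N (fun x => F x + G x) := by
  obtain ⟨M₁, c₁, b₁, w₁, rfl⟩ := hF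
  obtain ⟨M₂, c₂, b₂, w₂, rfl⟩ := hG
  refine ⟨M₁ + M₂, Fin.append c₁ c₂, Fin.append b₁ b₂, Fin.append w₁ w₂, ?_⟩
  funext x
  rw [Fin.sum_univ_add]
  simp [Fin.append_left, Fin.append_right]

lemma isFFN_smul {N : ℕ} (a : ℝ) {F : (Fin N → ℝ) → ℝ} (hF : IsFFN N F) :
    IsFFN N (fun x => a * F x) := by
  obtain ⟨M, c, b, w, rfl⟩ := hF
  exact ⟨M, fun i => a * c i, b, w, by funext x; rw [Finset.mul_sum]; ring_nf⟩

lemma isFFN_const {N : ℕ} (κ : ℝ) : IsFFN N (fun _ => κ) := by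
  refine ⟨1, fun _ => κ, fun _ => 1, 0, ?_⟩
  funext x
  simp

lemma isFFN_unit {N : ℕ} (w : Fin N → ℝ) (b : ℝ) :
    IsFFN N (fun x => max (∑ j, w j * x j + b) 0) := by
  refine ⟨1, fun _ => 1, fun _ => b, fun _ => w, ?_⟩
  funext x
  simp

lemma isFFN_sum {N : ℕ} {ι : Type*} [DecidableEq ι] (s : Finset ι) (F : ι → (Fin N → ℝ) → ℝ)
    (h : ∀ i ∈ s, IsFFN N (F i)) : IsFFN N (fun x => ∑ i ∈ s, F i x) := by
  induction s using Finset.induction_on with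
  | empty => simpa using isFFN_zero N
  | insert a s hx ih =>
    simp only [Finset.sum_insert hx]
    exact isFFN_add (h a (Finset.mem_insert_self a s))
      (ih fun i hi => h i (Finset.mem_insert_of_mem hi))

lemma pl_key (g : ℝ → ℝ) (C : ℝ) (hC : 0 < C) (n : ℕ) (hn : 0 < n) (ω : ℝ) (hω : 0 ≤ ω)
    (hmod : ∀ s ∈ Set.Icc (-C) C, ∀ u ∈ Set.Icc (-C) C, |s - u| ≤ 2 * C / n → |g s - g u| ≤ ω)
    (u : ℝ) (hu : u ∈ Set.Icc (-C) C) :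
    |(g (-C) + ∑ i ∈ range n,
        ((g (-C + (i + 1) * (2 * C / n)) - g (-C + i * (2 * C / n))) * n / (2 * C)) *
          (max (u - (-C + i * (2 * C / n))) 0 - max (u - (-C + (i + 1) * (2 * C / n))) 0))
      - g u| ≤ 2 * ω := by
  obtain ⟨hu1, hu2⟩ := hu
  set Δ : ℝ := 2 * C / n with hΔdef
  have hn' : (0:ℝ) < n := by exact_mod_cast hn
  have hΔ : 0 < Δ := by positivity
  set t : ℕ → ℝ := fun i => -C + i * Δ with ht
  set m : ℕ → ℝ := fun i => min u (t i) with hm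
  have htmono : ∀ {i j : ℕ}, i ≤ j → t i ≤ t j := by
    intro i j hij
    have : (i:ℝ) ≤ j := by exact_mod_cast hij
    simp only [ht]
    nlinarith
  have ht0 : t 0 = -C := by simp [ht]
  have htn : t n = C := by
    simp only [ht, hΔdef]
    field_simp
    ring
  have htic : ∀ i : ℕ, i ≤ n → t i ∈ Set.Icc (-C) C := by
    intro i hi
    constructor
    · rw [← ht0]; exact htmono (Nat.zero_le i)
    · rw [← htn]; exact htmono hi
  have hmax : ∀ a, max (u - a) 0 = u - min u a := by
    intro a
    rcases le_total u a with h | h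
    · rw [min_eq_left h, max_eq_right (by linarith), sub_self]
    · rw [min_eq_right h, max_eq_left (by linarith)]
  have hm0 : m 0 = -C := by simp [hm, ht0, min_eq_right hu1]
  have hmn : m n = u := by simp [hm, htn, min_eq_left hu2]
  set d : ℕ → ℝ := fun i => (g (t (i + 1)) - g (t i)) * n / (2 * C) with hd
  set e : ℕ → ℝ := fun i => d i * (m (i + 1) - m i) - (g (m (i + 1)) - g (m i)) with he
  have hdmul : ∀ i, d i * Δ = g (t (i + 1)) - g (t i) := by
    intro i
    simp only [hd, hΔdef]
    field_simp
  have he_lo : ∀ i, u ≤ t i → e i = 0 := by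
    intro i hi
    have h1 : m i = u := min_eq_left hi
    have h2 : m (i + 1) = u := min_eq_left (hi.trans (htmono (Nat.le_succ i)))
    simp [he, h1, h2]
  have he_hi : ∀ i, t (i + 1) ≤ u → e i = 0 := by
    intro i hi
    have h1 : m i = t i := min_eq_right ((htmono (Nat.le_succ i)).trans hi)
    have h2 : m (i + 1) = t (i + 1) := min_eq_right hi
    have h3 : t (i + 1) - t i = Δ := by simp only [ht]; push_cast; ring
    simp only [he, h1, h2, h3, hdmul i]
    ring
  have key : (g (-C) + ∑ i ∈ range n, d i * (m (i + 1) - m i)) - g u = ∑ i ∈ range n, e i := by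
    have htel : ∑ i ∈ range n, (g (m (i + 1)) - g (m i)) = g u - g (-C) := by
      rw [Finset.sum_range_sub (fun i => g (m i)), hmn, hm0]
    simp only [he, Finset.sum_sub_distrib, htel]
    ring
  have main : (g (-C) + ∑ i ∈ range n, d i * (m (i + 1) - m i)) - g u =
      (g (-C) + ∑ i ∈ range n,
        ((g (-C + (i + 1) * (2 * C / n)) - g (-C + i * (2 * C / n))) * n / (2 * C)) *
          (max (u - (-C + i * (2 * C / n))) 0 - max (u - (-C + (i + 1) * (2 * C / n))) 0))
      - g u := by
    congr 2
    apply Finset.sum_congr rfl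
    intro i _
    simp only [hd, hm, ht, hΔdef, hmax]
    push_cast
    ring
  rw [← main, key]
  by_cases hex : ∃ k ∈ range n, t k < u ∧ u < t (k + 1)
  · obtain ⟨k, hk, hk1, hk2⟩ := hex
    rw [Finset.sum_eq_single_of_mem k hk]
    · -- bound |e k|
      have hkn : k < n := Finset.mem_range.mp hk
      have htk : t k ∈ Set.Icc (-C) C := htic k hkn.le
      have htk1 : t (k + 1) ∈ Set.Icc (-C, C).1 (-C, C).2 := htic (k + 1) hkn
      have h1 : m k = t k := min_eq_right hk1.le
      have h2 : m (k + 1) = u := min_eq_left hk2.le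
      have hdk : |d k| * Δ ≤ ω := by
        have hdiff : |g (t (k + 1)) - g (t k)| ≤ ω := by
          apply hmod _ (htic (k + 1) hkn) _ (htic k hkn.le)
          have h3 : t (k + 1) - t k = Δ := by simp only [ht]; push_cast; ring
          rw [h3, abs_of_pos hΔ]
        calc |d k| * Δ = |d k * Δ| := by rw [abs_mul, abs_of_pos hΔ]
          _ = |g (t (k + 1)) - g (t k)| := by rw [hdmul]
          _ ≤ ω := hdiff
      have hut : |u - t k| ≤ Δ := by
        have h3 : t (k + 1) - t k = Δ := by simp only [ht]; push_cast; ring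
        rw [abs_of_nonneg (by linarith)]
        linarith
      have hgu : |g u - g (t k)| ≤ ω := hmod u ⟨hu1, hu2⟩ (t k) (htic k hkn.le) hut
      have : |e k| ≤ |d k| * |u - t k| + |g u - g (t k)| := by
        simp only [he, h1, h2]
        calc |d k * (u - t k) - (g u - g (t k))| ≤ |d k * (u - t k)| + |g u - g (t k)| :=
              abs_sub _ _
          _ = |d k| * |u - t k| + |g u - g (t k)| := by rw [abs_mul]
      have h4 : |d k| * |u - t k| ≤ |d k| * Δ := by
        apply mul_le_mul_of_nonneg_left hut (abs_nonneg _)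
      linarith
    · intro j hj hjk
      rcases lt_or_gt_of_ne hjk with h | h
      · exact he_hi j (le_trans (htmono h) hk1.le)
      · exact he_lo j (le_trans hk2.le (htmono h))
  · push_neg at hex
    rw [Finset.sum_eq_zero]
    · simp [hω]
    · intro i hi
      rcases lt_or_ge (t i) u with h | h
      · exact he_hi i (hex i hi h)
      · exact he_lo i h

lemma isFFN_congr {N : ℕ} {F G : (Fin N → ℝ) → ℝ} (hF : IsFFN N F) (h : ∀ x, F x = G x) :
    IsFFN N G := by
  obtain ⟨M, c, b, w, rfl⟩ := hF
  exact ⟨M, c, b, w, by funext x; rw [← h]⟩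

lemma ridge_exp_approx {N : ℕ} (B : ℝ) (hB : 0 < B) (K : Set (Fin N → ℝ))
    (hKsub : K ⊆ Set.univ.pi fun _ : Fin N => Set.Icc (-B) B) (w : Fin N → ℝ)
    (δ : ℝ) (hδ : 0 < δ) :
    ∃ F, IsFFN N F ∧ ∀ x ∈ K, |F x - Real.exp (∑ j, w j * x j)| ≤ δ := by
  set C : ℝ := (∑ j, |w j|) * B + 1 with hCdef
  have hC : 0 < C := by
    have : 0 ≤ (∑ j, |w j|) * B := by positivity
    linarith
  have hrange : ∀ x ∈ K, (∑ j, w j * x j) ∈ Set.Icc (-C) C := by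
    intro x hx
    have hxj : ∀ j, |x j| ≤ B := by
      intro j
      have := hKsub hx j (Set.mem_univ j)
      exact abs_le.mpr this
    have habs : |∑ j, w j * x j| ≤ C := by
      calc |∑ j, w j * x j| ≤ ∑ j, |w j * x j| := Finset.abs_sum_le_sum_abs _ _
        _ ≤ ∑ j, |w j| * B := by
            apply Finset.sum_le_sum
            intro j _
            rw [abs_mul]
            exact mul_le_mul_of_nonneg_left (hxj j) (abs_nonneg _)
        _ = (∑ j, |w j|) * B := by rw [Finset.sum_mul]
        _ ≤ C := by simp [hCdef]
    exact abs_le.mp habs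
  -- Lipschitz bound for exp on (-∞, C]
  have hlip : ∀ s u : ℝ, s ≤ u → u ≤ C → Real.exp u - Real.exp s ≤ Real.exp C * (u - s) := by
    intro s u hsu huC
    have h1 := Real.add_one_le_exp (s - u)
    have h2 : Real.exp s = Real.exp u * Real.exp (s - u) := by
      rw [← Real.exp_add]; ring_nf
    have h3 := Real.exp_pos u
    have h4 : Real.exp u ≤ Real.exp C := Real.exp_le_exp.mpr huC
    nlinarith
  obtain ⟨n, hngt⟩ := exists_nat_gt (2 * C * Real.exp C * 2 / δ + 1)
  have hn' : (0:ℝ) < n := by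
    have h0 : (0:ℝ) ≤ 2 * C * Real.exp C * 2 / δ := by positivity
    linarith
  have hn : 0 < n := by exact_mod_cast hn'
  have hmod : ∀ s ∈ Set.Icc (-C) C, ∀ u ∈ Set.Icc (-C) C, |s - u| ≤ 2 * C / n →
      |Real.exp s - Real.exp u| ≤ δ / 2 := by
    intro s hs u hu hd
    have key : ∀ a b : ℝ, a ≤ b → b ≤ C → b - a ≤ 2 * C / n →
        Real.exp b - Real.exp a ≤ δ / 2 := by
      intro a b hab hbC hba
      have h1 := hlip a b hab hbC
      have h2 : Real.exp C * (b - a) ≤ Real.exp C * (2 * C / n) := by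
        apply mul_le_mul_of_nonneg_left hba (Real.exp_pos C).le
      have h3 : Real.exp C * (2 * C / n) ≤ δ / 2 := by
        have h5 : 2 * C * Real.exp C * 2 / δ < n := by linarith
        rw [div_lt_iff₀ hδ] at h5
        have h6 : Real.exp C * (2 * C / n) = 2 * C * Real.exp C / n := by ring
        rw [h6, div_le_div_iff₀ hn' (by norm_num : (0:ℝ) < 2)]
        linarith
      linarith
    rcases le_total s u with h | h
    · rw [abs_sub_comm] at hd ⊢
      rw [abs_of_nonneg (by linarith : (0:ℝ) ≤ u - s)] at hd
      rw [abs_of_nonneg (by linarith [Real.exp_le_exp.mpr h] : (0:ℝ) ≤ Real.exp u - Real.exp s)]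
      exact key s u h hu.2 hd
    · rw [abs_of_nonneg (by linarith : (0:ℝ) ≤ s - u)] at hd
      rw [abs_of_nonneg (by linarith [Real.exp_le_exp.mpr h] : (0:ℝ) ≤ Real.exp s - Real.exp u)]
      exact key u s h hs.2 hd
  refine ⟨fun x => Real.exp (-C) + ∑ i ∈ range n,
      ((Real.exp (-C + (i + 1) * (2 * C / n)) - Real.exp (-C + i * (2 * C / n))) * n / (2 * C)) *
        (max ((∑ j, w j * x j) - (-C + i * (2 * C / n))) 0
          - max ((∑ j, w j * x j) - (-C + (i + 1) * (2 * C / n))) 0), ?_, ?_⟩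
  · apply isFFN_add (isFFN_const (Real.exp (-C)))
    apply isFFN_sum
    intro i _
    set di : ℝ := (Real.exp (-C + (i + 1) * (2 * C / n)) - Real.exp (-C + i * (2 * C / n)))
        * n / (2 * C)
    apply isFFN_congr (isFFN_add
      (isFFN_smul di (isFFN_unit w (-(-C + i * (2 * C / n)))))
      (isFFN_smul (-di) (isFFN_unit w (-(-C + (i + 1) * (2 * C / n))))))
    intro x
    have e1 : (∑ j, w j * x j) + -(-C + i * (2 * C / n))
        = (∑ j, w j * x j) - (-C + i * (2 * C / n)) := by ring
    have e2 : (∑ j, w j * x j) + -(-C + (i + 1) * (2 * C / n))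
        = (∑ j, w j * x j) - (-C + (i + 1) * (2 * C / n)) := by ring
    rw [e1, e2]
    ring
  · intro x hx
    have := pl_key Real.exp C hC n hn (δ / 2) (by linarith)
      hmod (∑ j, w j * x j) (hrange x hx)
    calc _ ≤ 2 * (δ / 2) := this
      _ = δ := by ring

/-- Universal approximation of continuous functions on compact sets by two-layer
ReLU feed-forward networks, in `L^p` norm. -/
theorem relu_ffn_universal_approx {N : ℕ} (B : ℝ) (hB : 0 < B)
    (K : Set (Fin N → ℝ)) (hK : IsCompact K)
    (hKsub : K ⊆ Set.univ.pi fun _ : Fin N => Set.Icc (-B) B)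
    (f : (Fin N → ℝ) → ℝ) (hf : ContinuousOn f K)
    (ε : ℝ) (hε : 0 < ε) (p : ℝ) (hp : 1 ≤ p) :
    ∃ (M : ℕ) (c b : Fin M → ℝ) (w : Fin M → Fin N → ℝ),
      (∫ x in K, |(∑ i, c i * max (∑ j, w i j * x j + b i) 0) - f x| ^ p) ^ (1 / p)
        ≤ ε := by
  have hp0 : (0:ℝ) < p := lt_of_lt_of_le one_pos hp
  set V : ℝ := (volume K).toReal with hV
  have hV0 : 0 ≤ V := ENNReal.toReal_nonneg
  have hVp0 : 0 ≤ V ^ (1 / p) := Real.rpow_nonneg hV0 _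
  set δ : ℝ := ε / (V ^ (1 / p) + 1) with hδdef
  have hδ : 0 < δ := by positivity
  -- Step 1: uniform approximation on K by an FFN
  obtain ⟨F, hFffn, hFapp⟩ : ∃ F, IsFFN N F ∧ ∀ x ∈ K, |F x - f x| ≤ δ := by
    haveI : CompactSpace K := isCompact_iff_compactSpace.mp hK
    -- the exponential ridge functions as continuous maps on K
    have hcont : ∀ w : Fin N → ℝ,
        Continuous fun x : K => Real.exp (∑ j, w j * (x : Fin N → ℝ) j) := by
      intro w
      apply Real.continuous_exp.comp
      apply continuous_finset_sum
      intro j _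
      exact continuous_const.mul ((continuous_apply j).comp continuous_subtype_val)
    set φ : (Fin N → ℝ) → C(K, ℝ) := fun w => ⟨fun x => Real.exp (∑ j, w j * (x : Fin N → ℝ) j),
      hcont w⟩ with hφ
    set E : Set C(K, ℝ) := Set.range φ with hE
    set A : Subalgebra ℝ C(K, ℝ) := Algebra.adjoin ℝ E with hA
    have hsep : A.SeparatesPoints := by
      intro x y hxy
      have hxy' : (x : Fin N → ℝ) ≠ (y : Fin N → ℝ) := fun h => hxy (Subtype.ext h)
      obtain ⟨j, hj⟩ := Function.ne_iff.mp hxy'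
      set wj : Fin N → ℝ := Pi.single j 1 with hwj
      refine ⟨_, ⟨φ wj, Algebra.subset_adjoin ⟨wj, rfl⟩, rfl⟩, ?_⟩
      have hsum : ∀ z : K, (∑ k, wj k * (z : Fin N → ℝ) k)
          = (z : Fin N → ℝ) j := by
        intro z
        rw [Finset.sum_eq_single j]
        · simp [hwj]
        · intro k _ hk
          simp [hwj, Pi.single_apply, hk]
        · simp
      simp only [hφ, ContinuousMap.coe_mk, hsum]
      exact fun h => hj (Real.exp_eq_exp.mp h)
    obtain ⟨g, hg⟩ := ContinuousMap.exists_mem_subalgebra_near_continuous_of_separatesPoints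
      A hsep (K.restrict f) (hf.restrict) (δ / 2) (by positivity)
    -- every element of A is uniformly approximable by FFNs
    have hS : ∀ h : C(K, ℝ), h ∈ Submodule.span ℝ E → ∀ η : ℝ, 0 < η →
        ∃ F, IsFFN N F ∧ ∀ x : K, |F x - h x| ≤ η := by
      intro h hh
      induction hh using Submodule.span_induction with
      | mem h hmem =>
        obtain ⟨w, rfl⟩ := hmem
        intro η hη
        obtain ⟨F, hF1, hF2⟩ := ridge_exp_approx B hB K hKsub w η hη
        exact ⟨F, hF1, fun x => hF2 x x.2⟩
      | zero =>
        intro η hη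
        exact ⟨fun _ => 0, isFFN_zero N, fun x => by simp [hη.le]⟩
      | add h₁ h₂ _ _ ih₁ ih₂ =>
        intro η hη
        obtain ⟨F₁, hF₁, hF₁e⟩ := ih₁ (η / 2) (by linarith)
        obtain ⟨F₂, hF₂, hF₂e⟩ := ih₂ (η / 2) (by linarith)
        refine ⟨fun x => F₁ x + F₂ x, isFFN_add hF₁ hF₂, fun x => ?_⟩
        have h1 := hF₁e x
        have h2 := hF₂e x
        simp only [ContinuousMap.add_apply]
        calc |F₁ ↑x + F₂ ↑x - (h₁ x + h₂ x)| = |(F₁ ↑x - h₁ x) + (F₂ ↑x - h₂ x)| := by ring_nf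
          _ ≤ |F₁ ↑x - h₁ x| + |F₂ ↑x - h₂ x| := abs_add_le _ _
          _ ≤ η := by linarith
      | smul a h _ ih =>
        intro η hη
        obtain ⟨F, hF, hFe⟩ := ih (η / (|a| + 1)) (by positivity)
        refine ⟨fun x => a * F x, isFFN_smul a hF, fun x => ?_⟩
        have h1 := hFe x
        simp only [ContinuousMap.smul_apply, smul_eq_mul]
        calc |a * F ↑x - a * h x| = |a| * |F ↑x - h x| := by rw [← abs_mul]; ring_nf
          _ ≤ |a| * (η / (|a| + 1)) := mul_le_mul_of_nonneg_left h1 (abs_nonneg a)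
          _ ≤ (|a| + 1) * (η / (|a| + 1)) := by
              apply mul_le_mul_of_nonneg_right (by linarith) (by positivity)
          _ = η := by field_simp
    -- A = span of E since E is a submonoid
    have hmem : (g : C(K, ℝ)) ∈ Submodule.span ℝ E := by
      have hgA : (g : C(K, ℝ)) ∈ A := g.2
      have hclosure : (Submonoid.closure E : Set C(K, ℝ)) = E := by
        have : ∃ S : Submonoid C(K, ℝ), (S : Set C(K, ℝ)) = E := by
          refine ⟨⟨⟨E, ?_⟩, ?_⟩, rfl⟩
          · rintro a b ⟨w, rfl⟩ ⟨v, rfl⟩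
            refine ⟨w + v, ?_⟩
            ext x
            simp only [hφ, ContinuousMap.mul_apply, ContinuousMap.coe_mk, ← Real.exp_add,
              ← Finset.sum_add_distrib]
            congr 1
            apply Finset.sum_congr rfl
            intro j _
            simp [Pi.add_apply]
            ring
          · refine ⟨0, ?_⟩
            ext x
            simp [hφ]
        obtain ⟨S, hSE⟩ := this
        rw [← hSE, Submonoid.closure_eq]
      have h7 : Submodule.span ℝ E = Subalgebra.toSubmodule A := by
        rw [hA, Algebra.adjoin_eq_span, hclosure]
      rw [h7]
      exact hgA
    obtain ⟨F, hF1, hF2⟩ := hS g hmem (δ / 2) (by positivity)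
    refine ⟨F, hF1, fun x hx => ?_⟩
    have h1 := hF2 ⟨x, hx⟩
    have h2 := hg ⟨x, hx⟩
    rw [Real.norm_eq_abs] at h2
    have : (K.restrict f) ⟨x, hx⟩ = f x := rfl
    rw [this] at h2
    calc |F x - f x| = |(F x - (g : C(K, ℝ)) ⟨x, hx⟩) + ((g : C(K, ℝ)) ⟨x, hx⟩ - f x)| := by
          ring_nf
      _ ≤ |F x - (g : C(K, ℝ)) ⟨x, hx⟩| + |(g : C(K, ℝ)) ⟨x, hx⟩ - f x| := abs_add_le _ _
      _ ≤ δ / 2 + δ / 2 := add_le_add h1 h2.le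
      _ = δ := by ring
  -- Step 2: from uniform to L^p bound
  obtain ⟨M, c, b, w, rfl⟩ := hFffn
  refine ⟨M, c, b, w, ?_⟩
  set F : (Fin N → ℝ) → ℝ := fun x => ∑ i, c i * max (∑ j, w i j * x j + b i) 0 with hFdef
  have hFmoo : ∀ x ∈ K, |F x - f x| ≤ δ := hFapp
  have hFcont : Continuous F := by
    apply continuous_finset_sum
    intro i _
    apply continuous_const.mul
    apply Continuous.max _ continuous_const
    apply Continuous.add _ continuous_const
    exact continuous_finset_sum _ fun j _ => continuous_const.mul (continuous_apply j)
  have hmeasK : MeasurableSet K := hK.measurableSet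
  have habs : Continuous fun y : ℝ => |y| ^ p := by
    rw [continuous_iff_continuousAt]
    intro y
    exact (Real.continuousAt_rpow_const _ _ (Or.inr hp0.le)).comp continuous_abs.continuousAt
  have hcont2 : ContinuousOn (fun x => |F x - f x| ^ p) K :=
    habs.comp_continuousOn ((hFcont.continuousOn).sub hf)
  have hint : IntegrableOn (fun x => |F x - f x| ^ p) K volume :=
    hcont2.integrableOn_compact hK
  have hintc : IntegrableOn (fun _ : Fin N → ℝ => δ ^ p) K volume :=
    integrableOn_const hK.measure_lt_top.ne
  have h1 : (∫ x in K, |F x - f x| ^ p) ≤ ∫ _x in K, δ ^ p := by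
    apply setIntegral_mono_on hint hintc hmeasK
    intro x hx
    exact Real.rpow_le_rpow (abs_nonneg _) (hFmoo x hx) hp0.le
  have h2 : (∫ _x in K, δ ^ p) = V * δ ^ p := by
    rw [setIntegral_const, smul_eq_mul]; rfl
  have h3 : 0 ≤ ∫ x in K, |F x - f x| ^ p :=
    setIntegral_nonneg hmeasK fun x _ => Real.rpow_nonneg (abs_nonneg _) p
  have h4 : (∫ x in K, |F x - f x| ^ p) ^ (1 / p) ≤ (V * δ ^ p) ^ (1 / p) := by
    apply Real.rpow_le_rpow h3 (by linarith) (by positivity)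
  have h5 : (V * δ ^ p) ^ (1 / p) = V ^ (1 / p) * δ := by
    rw [Real.mul_rpow hV0 (Real.rpow_nonneg hδ.le p), ← Real.rpow_mul hδ.le,
      mul_one_div, div_self hp0.ne', Real.rpow_one]
  have h6 : V ^ (1 / p) * δ ≤ ε := by
    have hle : V ^ (1 / p) * δ ≤ (V ^ (1 / p) + 1) * δ := by nlinarith
    have heq : (V ^ (1 / p) + 1) * δ = ε := by
      rw [hδdef]
      field_simp
    linarith
  calc (∫ x in K, |F x - f x| ^ p) ^ (1 / p) ≤ (V * δ ^ p) ^ (1 / p) := h4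
    _ = V ^ (1 / p) * δ := h5
    _ ≤ ε := h6
end
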